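/- Let G be a finite solvable group with exactly n distinct prime divisors of its order. If |G| is square-free, then the number of conjugacy classes of subgroups of G equals 2^n, one for each divisor of |G|. -/

import Mathlib

open Pointwise

/-!
A group of square-free order is a Z-group, hence solvable, so when nontrivial it has a normal
subgroup `N` of prime order `q` (a Sylow subgroup of the last nontrivial term of the derived
series). By induction on `|G|`, `G` has a subgroup of every order `d ∣ |G|`: the preimage of one
in `G ⧸ N` if `q ∣ d`, and one inside a Schur–Zassenhaus complement of `N` otherwise. Subgroups
`H`, `K` of the same order `d` are conjugate: if `q ∣ d` both contain `N` (as `q² ∤ |G|`) and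
conjugacy lifts from `G ⧸ N`; otherwise, after a conjugation making their images in `G ⧸ N`
equal, both are complements of the abelian group `N` in `N K`, and such complements are
conjugate. Hence the order of a subgroup determines its conjugacy class, and every divisor of
`|G|` occurs.
-/

universe u

namespace Subgroup

variable {G : Type u} [Group G]

theorem conjAct_smul_eq_map (g : ConjAct G) (H : Subgroup G) :
    g • H = H.map (MulAut.conj (ConjAct.ofConjAct g)).toMonoidHom := by
  rw [pointwise_smul_def]; rfl

theorem card_conjAct_smul (g : ConjAct G) (H : Subgroup G) :
    Nat.card (g • H : Subgroup G) = Nat.card H :=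
  Nat.card_congr (equivSMul g H).toEquiv.symm

theorem map_conjAct_smul {G' : Type*} [Group G'] (f : G →* G') (g : ConjAct G) (H : Subgroup G) :
    (g • H).map f = ConjAct.toConjAct (f (ConjAct.ofConjAct g)) • H.map f := by
  simp only [conjAct_smul_eq_map, map_map, ConjAct.ofConjAct_toConjAct]
  congr 1
  ext x
  simp [MulAut.conj_apply]

theorem Normal.le_conjAct_smul {N H : Subgroup G} (hN : N.Normal) (hNH : N ≤ H) (g : ConjAct G) :
    N ≤ g • H := by
  rw [← hN.conjAct g]
  exact pointwise_smul_le_pointwise_smul_iff.mpr hNH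

theorem exists_conjAct_smul_eq_of_subgroupOf {L H K : Subgroup G} (hH : H ≤ L) (hK : K ≤ L)
    (h : ∃ g : ConjAct L, g • H.subgroupOf L = K.subgroupOf L) :
    ∃ g : ConjAct G, g • H = K := by
  obtain ⟨g, hg⟩ := h
  have := congrArg (map L.subtype) hg
  rw [map_conjAct_smul, subgroupOf_map_subtype, subgroupOf_map_subtype, inf_of_le_left hH,
    inf_of_le_left hK] at this
  exact ⟨_, this⟩

theorem card_subgroupOf (H K : Subgroup G) :
    Nat.card (H.subgroupOf K) = Nat.card (H ⊓ K : Subgroup G) := by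
  rw [← card_map_of_injective K.subtype_injective, subgroupOf_map_subtype]

theorem card_subgroupOf_of_le {H K : Subgroup G} (h : H ≤ K) :
    Nat.card (H.subgroupOf K) = Nat.card H :=
  Nat.card_congr (subgroupOfEquivOfLe h).toEquiv

section Quotient

variable (N : Subgroup G) [N.Normal]

theorem card_map_mk'_mul_card_inf (H : Subgroup G) :
    Nat.card (H.map (QuotientGroup.mk' N)) * Nat.card (N ⊓ H : Subgroup G) = Nat.card H := by
  set f := (QuotientGroup.mk' N).comp H.subtype
  have hrange : f.range = H.map (QuotientGroup.mk' N) := by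
    rw [MonoidHom.range_comp, range_subtype]
  have hker : f.ker = N.subgroupOf H := by
    rw [← MonoidHom.comap_ker, QuotientGroup.ker_mk']
    rfl
  rw [← hrange, ← card_subgroupOf, ← hker, ← index_ker, mul_comm, card_mul_index]

theorem card_map_mk'_of_disjoint {H : Subgroup G} (h : Disjoint N H) :
    Nat.card (H.map (QuotientGroup.mk' N)) = Nat.card H := by
  simpa [disjoint_iff.mp h] using card_map_mk'_mul_card_inf N H

theorem card_map_mk'_mul_card_of_le {H : Subgroup G} (h : N ≤ H) :
    Nat.card (H.map (QuotientGroup.mk' N)) * Nat.card N = Nat.card H := by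
  simpa [inf_of_le_left h] using card_map_mk'_mul_card_inf N H

theorem card_comap_mk' (K : Subgroup (G ⧸ N)) :
    Nat.card (K.comap (QuotientGroup.mk' N)) = Nat.card K * Nat.card N := by
  have hN : N ≤ K.comap (QuotientGroup.mk' N) :=
    (QuotientGroup.ker_mk' N).ge.trans (ker_le_comap _ _)
  rw [← card_map_mk'_mul_card_of_le N hN,
    map_comap_eq_self_of_surjective (QuotientGroup.mk'_surjective N)]

theorem exists_conjAct_smul_map_mk'_eq {H K : Subgroup G}
    (h : ∃ g : ConjAct (G ⧸ N),
      g • H.map (QuotientGroup.mk' N) = K.map (QuotientGroup.mk' N)) :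
    ∃ g : ConjAct G, (g • H).map (QuotientGroup.mk' N) = K.map (QuotientGroup.mk' N) := by
  obtain ⟨g, hg⟩ := h
  obtain ⟨x, hx⟩ := QuotientGroup.mk'_surjective N (ConjAct.ofConjAct g)
  refine ⟨ConjAct.toConjAct x, ?_⟩
  rw [map_conjAct_smul, ConjAct.ofConjAct_toConjAct, hx, ConjAct.toConjAct_ofConjAct, hg]

end Quotient

section SchurZassenhaus

variable [Finite G] {N : Subgroup G} [N.Normal] [IsMulCommutative N]

theorem IsComplement'.eq_stabilizer_quotientDiff (hN : (Nat.card N).Coprime N.index)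
    {K : Subgroup G} (h : IsComplement' N K) :
    K = MulAction.stabilizer G
      (show N.QuotientDiff from Quotient.mk'' ⟨K, isComplement'_def.mp h.symm⟩) := by
  refine eq_of_le_of_card_ge (fun k hk => ?_) ?_
  · exact congrArg Quotient.mk'' (Subtype.ext (op_smul_coe_set (inv_mem hk)))
  · have := (isComplement'_stabilizer_of_coprime
      (α := show N.QuotientDiff from Quotient.mk'' ⟨K, isComplement'_def.mp h.symm⟩)
      hN).card_mul_card.trans h.card_mul_card.symm
    exact (Nat.eq_of_mul_eq_mul_left Nat.card_pos this).le

theorem IsComplement'.exists_conjAct_smul_eq (hN : (Nat.card N).Coprime N.index)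
    {K₁ K₂ : Subgroup G} (h₁ : IsComplement' N K₁) (h₂ : IsComplement' N K₂) :
    ∃ g : ConjAct G, g • K₁ = K₂ := by
  obtain ⟨n, hn⟩ := exists_smul_eq hN (Quotient.mk'' ⟨K₁, isComplement'_def.mp h₁.symm⟩)
    (Quotient.mk'' ⟨K₂, isComplement'_def.mp h₂.symm⟩)
  refine ⟨ConjAct.toConjAct (n : G), ?_⟩
  rw [h₁.eq_stabilizer_quotientDiff hN, h₂.eq_stabilizer_quotientDiff hN, ← hn,
    conjAct_smul_eq_map]
  exact (MulAction.stabilizer_smul_eq_stabilizer_map_conj _ _).symm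

theorem exists_conjAct_smul_eq_of_map_mk'_eq {H K : Subgroup G}
    (hcop : (Nat.card N).Coprime (Nat.card H)) (hHK : Nat.card H = Nat.card K)
    (hmap : H.map (QuotientGroup.mk' N) = K.map (QuotientGroup.mk' N)) :
    ∃ g : ConjAct G, g • H = K := by
  set L := (K.map (QuotientGroup.mk' N)).comap (QuotientGroup.mk' N)
  have hHL : H ≤ L := (le_comap_map _ H).trans_eq (by rw [hmap])
  have hKL : K ≤ L := le_comap_map _ K
  have hNL : N ≤ L := (QuotientGroup.ker_mk' N).ge.trans (ker_le_comap _ _)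
  have hcardL : Nat.card L = Nat.card N * Nat.card H := by
    rw [card_comap_mk', ← hmap, card_map_mk'_of_disjoint N (disjoint_of_coprime_natCard hcop),
      mul_comm]
  have hcompl : ∀ X ≤ L, Nat.card X = Nat.card H →
      IsComplement' (N.subgroupOf L) (X.subgroupOf L) := fun X hX hXH =>
    isComplement'_of_coprime
      (by rw [card_subgroupOf_of_le hNL, card_subgroupOf_of_le hX, hXH, ← hcardL])
      (by rwa [card_subgroupOf_of_le hNL, card_subgroupOf_of_le hX, hXH])
  have hH := hcompl H hHL rfl
  refine exists_conjAct_smul_eq_of_subgroupOf hHL hKL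
    (hH.exists_conjAct_smul_eq ?_ (hcompl K hKL hHK.symm))
  rwa [hH.symm.index_eq_card, card_subgroupOf_of_le hNL, card_subgroupOf_of_le hHL]

end SchurZassenhaus

theorem exists_normal_isMulCommutative_ne_bot [Group.IsSolvable G] [Nontrivial G] :
    ∃ A : Subgroup G, A.Normal ∧ IsMulCommutative A ∧ A ≠ ⊥ := by
  classical
  have hsolv : ∃ n, derivedSeries G n = ⊥ := Group.IsSolvable.solvable
  have hn0 : Nat.find hsolv ≠ 0 := fun h => by simpa [h] using Nat.find_spec hsolv
  refine ⟨derivedSeries G (Nat.find hsolv - 1), derivedSeries_normal G _, ?_,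
    Nat.find_min hsolv (by omega)⟩
  rw [← commutator_self_eq_bot_iff, ← derivedSeries_succ, Nat.sub_add_cancel (by omega)]
  exact Nat.find_spec hsolv

section Squarefree

theorem coprime_card_index_of_squarefree (hsq : Squarefree (Nat.card G)) (N : Subgroup G) :
    (Nat.card N).Coprime N.index :=
  Nat.coprime_of_squarefree_mul (N.card_mul_index ▸ hsq)

variable [Finite G]

theorem le_of_card_dvd_of_normal {N H : Subgroup G} [N.Normal] (hN : (Nat.card N).Prime)
    (hN2 : ¬Nat.card N * Nat.card N ∣ Nat.card G) (hNH : Nat.card N ∣ Nat.card H) :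
    N ≤ H := by
  have key := card_map_mk'_mul_card_inf N H
  rcases hN.eq_one_or_self_of_dvd _ (card_dvd_of_le (inf_le_left : N ⊓ H ≤ N)) with h1 | hN'
  · refine absurd ?_ hN2
    rw [h1, mul_one] at key
    rw [card_eq_card_quotient_mul_card_subgroup N]
    exact mul_dvd_mul_right ((key ▸ hNH).trans (card_subgroup_dvd_card _)) _
  · exact inf_eq_left.mp (eq_of_le_of_card_ge inf_le_left hN'.ge)

theorem exists_normal_card_prime_of_squarefree [Nontrivial G] (hsq : Squarefree (Nat.card G)) :
    ∃ N : Subgroup G, N.Normal ∧ (Nat.card N).Prime := by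
  have := IsZGroup.of_squarefree hsq
  obtain ⟨A, hA, hAcomm, hA⟩ := exists_normal_isMulCommutative_ne_bot (G := G)
  set p := (Nat.card A).minFac
  have hp : p.Prime := Nat.minFac_prime (mt card_eq_one.mp hA)
  have := Fact.mk hp
  obtain P : Sylow p A := default
  have := P.characteristic_of_normal inferInstance
  refine ⟨(P : Subgroup A).map A.subtype, inferInstance, ?_⟩
  rwa [card_map_of_injective A.subtype_injective, P.card_eq_multiplicity,
    Nat.factorization_eq_one_of_squarefree (hsq.squarefree_of_dvd (card_subgroup_dvd_card A)) hp
      (Nat.minFac_dvd _), pow_one]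

theorem exists_card_eq_of_squarefree (hsq : Squarefree (Nat.card G)) {d : ℕ}
    (hd : d ∣ Nat.card G) : ∃ H : Subgroup G, Nat.card H = d := by
  induction hG : Nat.card G using Nat.strong_induction_on generalizing G d with
  | _ m ih =>
  subst hG
  rcases subsingleton_or_nontrivial G with hG | hG
  · refine ⟨⊥, ?_⟩
    rwa [card_bot, eq_comm, ← Nat.dvd_one, ← Nat.card_unique (α := G)]
  obtain ⟨N, hN, hq⟩ := exists_normal_card_prime_of_squarefree hsq
  have ihN : ∀ {X : Type u} [Group X] [Finite X], Nat.card N * Nat.card X = Nat.card G →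
      ∀ {e}, e ∣ Nat.card X → ∃ H : Subgroup X, Nat.card H = e := fun hX _ he =>
    ih _ ((Nat.lt_mul_iff_one_lt_left Nat.card_pos).mpr hq.one_lt |>.trans_eq hX)
      (hsq.squarefree_of_dvd (Dvd.intro_left _ hX)) he rfl
  by_cases hqd : Nat.card N ∣ d
  · obtain ⟨e, rfl⟩ := hqd
    have hcard : Nat.card N * Nat.card (G ⧸ N) = Nat.card G :=
      index_eq_card N ▸ N.card_mul_index
    obtain ⟨K, hK⟩ := ihN hcard (Nat.dvd_of_mul_dvd_mul_left hq.pos (hcard ▸ hd))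
    exact ⟨K.comap (QuotientGroup.mk' N), by rw [card_comap_mk', hK, mul_comm]⟩
  · obtain ⟨C, hC⟩ :=
      exists_right_complement'_of_coprime (coprime_card_index_of_squarefree hsq N)
    obtain ⟨D, hD⟩ := ihN hC.card_mul_card
      ((hq.coprime_iff_not_dvd.mpr hqd).symm.dvd_of_dvd_mul_left (hC.card_mul_card ▸ hd))
    exact ⟨D.map C.subtype, by rw [card_map_of_injective C.subtype_injective, hD]⟩

theorem exists_conjAct_smul_eq_of_squarefree (hsq : Squarefree (Nat.card G)) {H K : Subgroup G}
    (hHK : Nat.card H = Nat.card K) : ∃ g : ConjAct G, g • H = K := by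
  induction hG : Nat.card G using Nat.strong_induction_on generalizing G with
  | _ m ih =>
  subst hG
  rcases subsingleton_or_nontrivial G with hG | hG
  · exact ⟨1, Subsingleton.elim _ _⟩
  obtain ⟨N, hN, hq⟩ := exists_normal_card_prime_of_squarefree hsq
  have hcard : Nat.card N * Nat.card (G ⧸ N) = Nat.card G := index_eq_card N ▸ N.card_mul_index
  have ihQ : ∀ {H K : Subgroup G}, Nat.card (H.map (QuotientGroup.mk' N)) =
      Nat.card (K.map (QuotientGroup.mk' N)) →
      ∃ g : ConjAct G, (g • H).map (QuotientGroup.mk' N) = K.map (QuotientGroup.mk' N) :=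
    fun h => exists_conjAct_smul_map_mk'_eq N <|
      ih _ ((Nat.lt_mul_iff_one_lt_left Nat.card_pos).mpr hq.one_lt |>.trans_eq hcard)
        (hsq.squarefree_of_dvd (Dvd.intro_left _ hcard)) h rfl
  by_cases hqK : Nat.card N ∣ Nat.card K
  · have hN2 : ¬Nat.card N * Nat.card N ∣ Nat.card G :=
      fun h => hq.not_isUnit (hsq _ h)
    have hNH := le_of_card_dvd_of_normal hq hN2 (hHK ▸ hqK)
    have hNK := le_of_card_dvd_of_normal hq hN2 hqK
    obtain ⟨g, hg⟩ := ihQ (K := K) (Nat.eq_of_mul_eq_mul_right hq.pos (by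
      rw [card_map_mk'_mul_card_of_le N hNH, card_map_mk'_mul_card_of_le N hNK, hHK]))
    refine ⟨g, map_injective_of_ker_le _ ?_ ?_ hg⟩ <;> rw [QuotientGroup.ker_mk']
    exacts [hN.le_conjAct_smul hNH g, hNK]
  · have hcop : (Nat.card N).Coprime (Nat.card H) := hq.coprime_iff_not_dvd.mpr (hHK ▸ hqK)
    have : IsCyclic N := isCyclic_of_prime_card (hp := ⟨hq⟩) rfl
    obtain ⟨g, hg⟩ := ihQ (K := K) (by
      rw [card_map_mk'_of_disjoint N (disjoint_of_coprime_natCard hcop),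
        card_map_mk'_of_disjoint N (disjoint_of_coprime_natCard (hHK ▸ hcop)), hHK])
    obtain ⟨g', hg'⟩ := exists_conjAct_smul_eq_of_map_mk'_eq (by rwa [card_conjAct_smul])
      (by rw [card_conjAct_smul, hHK]) hg
    exact ⟨g' * g, by rw [mul_smul, hg']⟩

end Squarefree

end Subgroup

theorem Nat.card_divisors_of_squarefree {n : ℕ} (hn : Squarefree n) :
    n.divisors.card = 2 ^ n.primeFactors.card := by
  rw [Nat.card_divisors hn.ne_zero, Finset.prod_congr rfl fun p hp => by
    rw [Nat.factorization_eq_one_of_squarefree hn (Nat.prime_of_mem_primeFactors hp)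
      (Nat.dvd_of_mem_primeFactors hp)], Finset.prod_const]

theorem card_quotient_orbitRel_conjAct_subgroup_of_squarefree {G : Type*} [Group G] [Finite G]
    (hsq : Squarefree (Nat.card G)) :
    Nat.card (Quotient (MulAction.orbitRel (ConjAct G) (Subgroup G))) =
      (Nat.card G).divisors.card := by
  let cardOfClass : Quotient (MulAction.orbitRel (ConjAct G) (Subgroup G)) →
      (Nat.card G).divisors :=
    Quotient.lift (fun H => ⟨Nat.card H, Nat.mem_divisors.mpr
        ⟨Subgroup.card_subgroup_dvd_card H, Nat.card_pos.ne'⟩⟩)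
      (by rintro _ H ⟨g, rfl⟩; exact Subtype.ext (Subgroup.card_conjAct_smul g H))
  have hbij : cardOfClass.Bijective := by
    constructor
    · rintro ⟨H⟩ ⟨K⟩ h
      obtain ⟨g, hg⟩ :=
        Subgroup.exists_conjAct_smul_eq_of_squarefree hsq (congrArg Subtype.val h).symm
      exact Quotient.sound ⟨g, hg⟩
    · rintro ⟨d, hd⟩
      obtain ⟨H, hH⟩ := Subgroup.exists_card_eq_of_squarefree hsq (Nat.dvd_of_mem_divisors hd)
      exact ⟨⟦H⟧, Subtype.ext hH⟩
  rw [Nat.card_eq_of_bijective cardOfClass hbij, Nat.card_eq_finsetCard]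

theorem card_conjClasses_subgroups_of_squarefree_general (G : Type*) [Group G] [Fintype G]
    (n : ℕ) (hn : (Fintype.card G).primeFactors.card = n)
    (hsq : Squarefree (Fintype.card G)) :
    Nat.card (Quotient (MulAction.orbitRel (ConjAct G) (Subgroup G))) = 2 ^ n ∧
    Nat.card (Quotient (MulAction.orbitRel (ConjAct G) (Subgroup G))) =
      (Fintype.card G).divisors.card := by
  rw [← Nat.card_eq_fintype_card] at hn hsq ⊢
  have hcount := card_quotient_orbitRel_conjAct_subgroup_of_squarefree hsq
  exact ⟨by rw [hcount, Nat.card_divisors_of_squarefree hsq, hn], hcount⟩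

/-- A finite solvable group of square-free order with exactly `n` distinct prime divisors
has exactly `2 ^ n` conjugacy classes of subgroups, one for each divisor of `|G|`. -/
theorem card_conjClasses_subgroups_of_squarefree (G : Type*) [Group G] [Fintype G]
    (hsolv : IsSolvable G) (n : ℕ) (hn : (Fintype.card G).primeFactors.card = n)
    (hsq : Squarefree (Fintype.card G)) :
    Nat.card (Quotient (MulAction.orbitRel (ConjAct G) (Subgroup G))) = 2 ^ n ∧
    Nat.card (Quotient (MulAction.orbitRel (ConjAct G) (Subgroup G))) =
      (Fintype.card G).divisors.card :=
  card_conjClasses_subgroups_of_squarefree_general G n hn hsq
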